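/- arXiv:0704.3156 — 2 statements merged into one kernel-verified Lean document; each statement's English description precedes it below -/
import Mathlib

section
/- (Norm submultiplicativity of cloud convolution) Define |||ν||| := sup over markers η of Σ_{σ ⪯ η} |ν(σ)|. Then for clouds ν₁, ν₂ of finite norm, |||ν₁ * ν₂||| ≤ |||ν₁||| · |||ν₂|||. -/
open scoped ENNReal

/-- Convolution of clouds (real functions on markers, i.e. nonempty lists):
`(ν₁*ν₂)(η) = Σ` over decompositions `η = η₁ * η₂` with `last η₁ = first η₂`
of `ν₁(η₁) ν₂(η₂)`. -/
def cloudConv {X : Type*} (μ ν : List X → ℝ) : List X → ℝ :=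
  fun η => ∑ j ∈ Finset.range η.length, μ (η.take (j + 1)) * ν (η.drop j)

/-- The cloud norm `|||ν||| = sup_η Σ_{σ ⪯ η} |ν(σ)|` (valued in `[0,∞]`;
the empty list contributes `0` and does not affect the supremum). -/
noncomputable def cloudNorm {X : Type*} (ν : List X → ℝ) : ℝ≥0∞ :=
  ⨆ η : List X, ENNReal.ofReal (∑ j ∈ Finset.range η.length, |ν (η.take (j + 1))|)

/-! Writing `ancestorSum ν η = Σ_{σ ⪯ η} |ν(σ)|`, the triangle inequality bounds
`ancestorSum (ν₁ * ν₂) η` by a double sum over an ancestor `η.take (j + 1)` and a joint `i ≤ j`.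
Summing over `j` first turns the inner sum into `ancestorSum ν₂ (η.drop i)`, so
`ancestorSum (ν₁ * ν₂) η ≤ Σ_{i} |ν₁(η.take (i + 1))| · |||ν₂||| ≤ |||ν₁||| · |||ν₂|||`. -/

section

variable {X : Type*}

def ancestorSum (ν : List X → ℝ) (η : List X) : ℝ :=
  ∑ j ∈ Finset.range η.length, |ν (η.take (j + 1))|

theorem ofReal_ancestorSum_le_cloudNorm (ν : List X → ℝ) (η : List X) :
    ENNReal.ofReal (ancestorSum ν η) ≤ cloudNorm ν :=
  le_iSup (fun η : List X => ENNReal.ofReal (ancestorSum ν η)) η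

theorem ancestorSum_nonneg (ν : List X → ℝ) (η : List X) : 0 ≤ ancestorSum ν η :=
  Finset.sum_nonneg fun _ _ => abs_nonneg _

theorem cloudConv_take (μ ν : List X → ℝ) (η : List X) {j : ℕ} (hj : j < η.length) :
    cloudConv μ ν (η.take (j + 1)) =
      ∑ i ∈ Finset.range (j + 1), μ (η.take (i + 1)) * ν ((η.drop i).take (j - i + 1)) := by
  have hlen : (η.take (j + 1)).length = j + 1 := by
    rw [List.length_take]
    omega
  rw [cloudConv, hlen]
  refine Finset.sum_congr rfl fun i hi => ?_
  have hij : i ≤ j := Nat.lt_succ_iff.mp (Finset.mem_range.mp hi)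
  rw [List.take_take, min_eq_left (by omega), List.drop_take, show j + 1 - i = j - i + 1 by omega]

theorem ancestorSum_cloudConv_le (μ ν : List X → ℝ) (η : List X) :
    ancestorSum (cloudConv μ ν) η ≤
      ∑ i ∈ Finset.range η.length, |μ (η.take (i + 1))| * ancestorSum ν (η.drop i) := by
  calc ancestorSum (cloudConv μ ν) η
      ≤ ∑ j ∈ Finset.range η.length, ∑ i ∈ Finset.range (j + 1),
          |μ (η.take (i + 1))| * |ν ((η.drop i).take (j - i + 1))| := by
        refine Finset.sum_le_sum fun j hj => ?_
        rw [cloudConv_take μ ν η (Finset.mem_range.mp hj)]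
        refine (Finset.abs_sum_le_sum_abs _ _).trans_eq ?_
        simp only [abs_mul]
    _ = ∑ i ∈ Finset.range η.length, ∑ k ∈ Finset.range (η.length - i),
          |μ (η.take (i + 1))| * |ν ((η.drop i).take (k + 1))| :=
        Finset.sum_range_diag_flip η.length fun i k =>
          |μ (η.take (i + 1))| * |ν ((η.drop i).take (k + 1))|
    _ = ∑ i ∈ Finset.range η.length, |μ (η.take (i + 1))| * ancestorSum ν (η.drop i) := by
        simp only [ancestorSum, List.length_drop, Finset.mul_sum]

end

theorem cloudNorm_conv_le_general {X : Type*} (ν₁ ν₂ : List X → ℝ) :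
    cloudNorm (cloudConv ν₁ ν₂) ≤ cloudNorm ν₁ * cloudNorm ν₂ := by
  refine iSup_le fun η => ?_
  calc ENNReal.ofReal (ancestorSum (cloudConv ν₁ ν₂) η)
      ≤ ENNReal.ofReal (∑ i ∈ Finset.range η.length,
          |ν₁ (η.take (i + 1))| * ancestorSum ν₂ (η.drop i)) :=
        ENNReal.ofReal_le_ofReal (ancestorSum_cloudConv_le ν₁ ν₂ η)
    _ = ∑ i ∈ Finset.range η.length,
          ENNReal.ofReal |ν₁ (η.take (i + 1))| * ENNReal.ofReal (ancestorSum ν₂ (η.drop i)) := by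
        rw [ENNReal.ofReal_sum_of_nonneg fun i _ =>
          mul_nonneg (abs_nonneg _) (ancestorSum_nonneg ν₂ _)]
        simp only [ENNReal.ofReal_mul (abs_nonneg _)]
    _ ≤ ∑ i ∈ Finset.range η.length, ENNReal.ofReal |ν₁ (η.take (i + 1))| * cloudNorm ν₂ := by
        gcongr with i
        exact ofReal_ancestorSum_le_cloudNorm ν₂ _
    _ = ENNReal.ofReal (ancestorSum ν₁ η) * cloudNorm ν₂ := by
        rw [← Finset.sum_mul, ancestorSum, ENNReal.ofReal_sum_of_nonneg fun i _ => abs_nonneg _]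
    _ ≤ cloudNorm ν₁ * cloudNorm ν₂ := by
        gcongr
        exact ofReal_ancestorSum_le_cloudNorm ν₁ η

/-- Norm submultiplicativity of cloud convolution:
`|||ν₁ * ν₂||| ≤ |||ν₁||| · |||ν₂|||` for clouds of finite norm. -/
theorem cloudNorm_conv_le {X : Type*} (ν₁ ν₂ : List X → ℝ)
    (h₁ : cloudNorm ν₁ ≠ ⊤) (h₂ : cloudNorm ν₂ ≠ ⊤) :
    cloudNorm (cloudConv ν₁ ν₂) ≤ cloudNorm ν₁ * cloudNorm ν₂ :=
  cloudNorm_conv_le_general ν₁ ν₂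
end

section
/- (Convolution from the right preserves ⊴ iff ν ∈ R) For a nonnegative cloud ν, the following are equivalent: (a) for all clouds μ₁ ⊴ μ₂ one has μ₁*ν ⊴ μ₂*ν; (b) ρ¹*ν ⊴ ν, where ρ¹ is the indicator of level-1 markers; (c) ν~(η') ≤ ν~(η) whenever η' is a suffix of η. -/
/-- Cumulative distribution of a cloud: `μ~(η) = Σ_{σ ⪯ η} μ(σ)`. -/
def cloudCum {X : Type*} (μ : List X → ℝ) : List X → ℝ :=
  fun η => ∑ j ∈ Finset.range η.length, μ (η.take (j + 1))

/-- The partial order `μ ⊴ ν`: `μ~(η) ≤ ν~(η)` for all markers `η`. -/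
def cloudLE {X : Type*} (μ ν : List X → ℝ) : Prop :=
  ∀ η : List X, η ≠ [] → cloudCum μ η ≤ cloudCum ν η

/-- `ρ¹`, the indicator cloud of level-1 markers (lists of length 2). -/
def rhoOne {X : Type*} : List X → ℝ :=
  fun η => if η.length = 2 then 1 else 0

open Finset

section SummationByParts

variable {R : Type*} [CommRing R] [PartialOrder R] [IsOrderedRing R]

theorem sum_mul_nonneg_of_partialSums_nonneg {n : ℕ} {c d : ℕ → R}
    (hd : ∀ j < n, 0 ≤ ∑ i ∈ range (j + 1), d i)
    (hc : ∀ j, j + 1 < n → c (j + 1) ≤ c j) (hc₀ : ∀ j < n, 0 ≤ c j) :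
    0 ≤ ∑ i ∈ range n, c i * d i := by
  rcases Nat.eq_zero_or_pos n with rfl | hn
  · simp
  have by_parts := sum_range_by_parts c d n
  simp only [smul_eq_mul] at by_parts
  rw [by_parts, sub_nonneg]
  calc ∑ i ∈ range (n - 1), (c (i + 1) - c i) * ∑ j ∈ range (i + 1), d j ≤ 0 := by
        refine sum_nonpos fun i hi => ?_
        have hi : i + 1 < n := by simp only [mem_range] at hi; omega
        exact mul_nonpos_of_nonpos_of_nonneg (sub_nonpos.mpr (hc i hi)) (hd i (by omega))
    _ ≤ c (n - 1) * ∑ j ∈ range n, d j := by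
        refine mul_nonneg (hc₀ _ (by omega)) ?_
        simpa [Nat.sub_add_cancel hn] using hd (n - 1) (by omega)

theorem sum_mul_le_sum_mul_of_partialSums_le {n : ℕ} {a b c : ℕ → R}
    (hab : ∀ j < n, ∑ i ∈ range (j + 1), a i ≤ ∑ i ∈ range (j + 1), b i)
    (hc : ∀ j, j + 1 < n → c (j + 1) ≤ c j) (hc₀ : ∀ j < n, 0 ≤ c j) :
    ∑ i ∈ range n, a i * c i ≤ ∑ i ∈ range n, b i * c i := by
  have := sum_mul_nonneg_of_partialSums_nonneg (d := b - a)
    (fun j hj => by simpa [sum_sub_distrib] using hab j hj) hc hc₀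
  simpa [mul_sub, sum_sub_distrib, mul_comm] using this

end SummationByParts

section Clouds

variable {X : Type*}

@[simp]
theorem cloudCum_nil (μ : List X → ℝ) : cloudCum μ [] = 0 := by
  simp [cloudCum]

theorem cloudCum_nonneg {ν : List X → ℝ} (hν : ∀ η : List X, η ≠ [] → 0 ≤ ν η)
    (η : List X) : 0 ≤ cloudCum ν η :=
  sum_nonneg fun j hj => hν _ (List.ne_nil_of_length_pos
    (by rw [mem_range] at hj; rw [List.length_take]; omega))

theorem cloudCum_take (μ : List X → ℝ) {η : List X} {j : ℕ} (hj : j < η.length) :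
    cloudCum μ (η.take (j + 1)) = ∑ i ∈ range (j + 1), μ (η.take (i + 1)) := by
  rw [cloudCum, List.length_take, min_eq_left (by omega)]
  refine sum_congr rfl fun i hi => ?_
  rw [List.take_take, min_eq_left (by rw [mem_range] at hi; omega)]

theorem cloudCum_cloudConv (μ ν : List X → ℝ) (η : List X) :
    cloudCum (cloudConv μ ν) η
      = ∑ j ∈ range η.length, μ (η.take (j + 1)) * cloudCum ν (η.drop j) := by
  set n := η.length
  have inner (k : ℕ) (hk : k < n) : cloudConv μ ν (η.take (k + 1))
      = ∑ j ∈ range (k + 1), μ (η.take (j + 1)) * ν ((η.drop j).take (k + 1 - j)) := by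
    rw [cloudConv, List.length_take, min_eq_left (by omega)]
    refine sum_congr rfl fun j hj => ?_
    rw [List.take_take, min_eq_left (by rw [mem_range] at hj; omega), List.drop_take]
  calc cloudCum (cloudConv μ ν) η
      = ∑ k ∈ range n, ∑ j ∈ range (k + 1),
          μ (η.take (j + 1)) * ν ((η.drop j).take (k + 1 - j)) :=
        sum_congr rfl fun k hk => inner k (mem_range.mp hk)
    _ = ∑ j ∈ range n, ∑ k ∈ Ico j n, μ (η.take (j + 1)) * ν ((η.drop j).take (k + 1 - j)) :=
        sum_comm' fun k j => by simp only [mem_range, mem_Ico]; omega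
    _ = ∑ j ∈ range n, μ (η.take (j + 1)) * cloudCum ν (η.drop j) := by
        refine sum_congr rfl fun j hj => ?_
        rw [sum_Ico_eq_sum_range, cloudCum, List.length_drop, mul_sum]
        refine sum_congr rfl fun i _ => ?_
        rw [show j + i + 1 - j = i + 1 by omega]

/-- The cloud `ρᵏ`; a marker of level `k` is a list of length `k + 1`. -/
def levelIndicator (k : ℕ) : List X → ℝ :=
  fun η => if η.length = k + 1 then 1 else 0

theorem rhoOne_eq_levelIndicator : (rhoOne : List X → ℝ) = levelIndicator 1 := rfl

theorem levelIndicator_take {η : List X} {j : ℕ} (hj : j < η.length) (k : ℕ) :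
    levelIndicator k (η.take (j + 1)) = if j = k then 1 else 0 := by
  simp only [levelIndicator, List.length_take, min_eq_left (show j + 1 ≤ η.length by omega),
    add_left_inj]

theorem cloudCum_levelIndicator (k : ℕ) (η : List X) :
    cloudCum (levelIndicator k) η = if k < η.length then 1 else 0 := by
  rw [cloudCum, sum_congr rfl fun j hj => levelIndicator_take (mem_range.mp hj) k,
    sum_ite_eq']
  simp only [mem_range]

theorem cloudCum_cloudConv_levelIndicator (k : ℕ) (ν : List X → ℝ) (η : List X) :
    cloudCum (cloudConv (levelIndicator k) ν) η = cloudCum ν (η.drop k) := by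
  rw [cloudCum_cloudConv, sum_congr rfl fun j hj => by rw [levelIndicator_take (mem_range.mp hj) k]]
  simp only [ite_mul, one_mul, zero_mul, sum_ite_eq', mem_range]
  split_ifs with hk
  · rfl
  · rw [List.drop_eq_nil_of_le (by omega), cloudCum_nil]

theorem levelIndicator_cloudLE_of_le {k l : ℕ} (h : l ≤ k) :
    cloudLE (levelIndicator k : List X → ℝ) (levelIndicator l) := by
  intro η _
  simp only [cloudCum_levelIndicator]
  split_ifs <;> first | omega | norm_num

theorem cloudCum_cloudConv_rhoOne (ν : List X → ℝ) (η : List X) :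
    cloudCum (cloudConv rhoOne ν) η = cloudCum ν η.tail := by
  rw [rhoOne_eq_levelIndicator, cloudCum_cloudConv_levelIndicator, List.drop_one]

theorem cloudLE_rhoOne_cloudConv_iff (ν : List X → ℝ) :
    cloudLE (cloudConv rhoOne ν) ν ↔ ∀ η : List X, η ≠ [] → cloudCum ν η.tail ≤ cloudCum ν η := by
  simp only [cloudLE, cloudCum_cloudConv_rhoOne]

theorem cloudCum_tail_le_iff_suffix {ν : List X → ℝ} (hν : ∀ η : List X, η ≠ [] → 0 ≤ ν η) :
    (∀ η : List X, η ≠ [] → cloudCum ν η.tail ≤ cloudCum ν η) ↔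
      ∀ η η' : List X, η' ≠ [] → η' <:+ η → cloudCum ν η' ≤ cloudCum ν η := by
  constructor
  · rintro htail η η' - ⟨l, rfl⟩
    induction l with
    | nil => rfl
    | cons x l ih => exact ih.trans (htail (x :: (l ++ η')) (List.cons_ne_nil _ _))
  · intro hsuffix η hη
    rcases eq_or_ne η.tail [] with htail | htail
    · rw [htail, cloudCum_nil]
      exact cloudCum_nonneg hν η
    · exact hsuffix η η.tail htail (List.tail_suffix η)

theorem cloudLE_cloudConv_right_of_suffix {ν : List X → ℝ}
    (hν : ∀ η : List X, η ≠ [] → 0 ≤ ν η)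
    (hsuffix : ∀ η η' : List X, η' ≠ [] → η' <:+ η → cloudCum ν η' ≤ cloudCum ν η)
    {μ₁ μ₂ : List X → ℝ} (hμ : cloudLE μ₁ μ₂) : cloudLE (cloudConv μ₁ ν) (cloudConv μ₂ ν) := by
  intro η _
  rw [cloudCum_cloudConv, cloudCum_cloudConv]
  refine sum_mul_le_sum_mul_of_partialSums_le (fun j hj => ?_) (fun j hj => ?_)
    (fun j _ => cloudCum_nonneg hν _)
  · rw [← cloudCum_take μ₁ hj, ← cloudCum_take μ₂ hj]
    exact hμ _ (List.ne_nil_of_length_pos (by rw [List.length_take]; omega))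
  · rw [← List.drop_drop]
    exact hsuffix _ _ (List.ne_nil_of_length_pos (by simp only [List.length_drop]; omega))
      (List.drop_suffix _ _)

theorem cloudLE_rhoOne_cloudConv_of_cloudConv_right_mono {ν : List X → ℝ}
    (hmono : ∀ μ₁ μ₂ : List X → ℝ, cloudLE μ₁ μ₂ → cloudLE (cloudConv μ₁ ν) (cloudConv μ₂ ν)) :
    cloudLE (cloudConv rhoOne ν) ν := by
  intro η hη
  simpa only [cloudCum_cloudConv_levelIndicator, cloudCum_cloudConv_rhoOne, List.drop_zero,
    List.drop_one] using
    hmono _ _ (levelIndicator_cloudLE_of_le zero_le_one) η hη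

end Clouds

/-- For a nonnegative cloud `ν`, the following are equivalent:
(a) convolution on the right by `ν` preserves `⊴`;
(b) `ρ¹ * ν ⊴ ν`;
(c) `ν~(η') ≤ ν~(η)` whenever `η'` is a suffix of `η`. -/
theorem right_convolution_order_preserving {X : Type*} (ν : List X → ℝ)
    (hν : ∀ η : List X, η ≠ [] → 0 ≤ ν η) :
    ((∀ μ₁ μ₂ : List X → ℝ, cloudLE μ₁ μ₂ → cloudLE (cloudConv μ₁ ν) (cloudConv μ₂ ν))
        ↔ cloudLE (cloudConv rhoOne ν) ν)
    ∧ (cloudLE (cloudConv rhoOne ν) ν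
        ↔ ∀ η η' : List X, η' ≠ [] → η' <:+ η → cloudCum ν η' ≤ cloudCum ν η) := by
  have hbc := (cloudLE_rhoOne_cloudConv_iff ν).trans (cloudCum_tail_le_iff_suffix hν)
  exact ⟨⟨cloudLE_rhoOne_cloudConv_of_cloudConv_right_mono,
    fun hb _ _ => cloudLE_cloudConv_right_of_suffix hν (hbc.mp hb)⟩, hbc⟩
end
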